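/- arXiv:2106.03731 — 2 statements merged into one kernel-verified Lean document; each statement's English description precedes it below -/
import Mathlib

section
/- Let A, B, C ≥ 0, D ∈ ℝ, ρ, γ ∈ (0,1], and define f(t,y,z) = A - B·sgn(y)·|y| - C·sgn(y)·|y|^ρ·|z|^γ + D·y·|z|^γ. Then for all t ≥ 0, z ∈ ℝ, and y₁, y₂ ∈ ℝ, (y₁ - y₂)(f(t,y₁,z) - f(t,y₂,z)) ≤ |D|·(1 + |z|)·(y₁ - y₂)². -/
/-! Both `y ↦ sgn' y * |y|` and `y ↦ sgn' y * |y| ^ ρ` are nondecreasing, so the `B`- and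
`C`-terms of `f` are nonincreasing in `y` and only the linear `D`-term can contribute; it is
bounded using `|z| ^ γ ≤ 1 + |z|`. -/

noncomputable def sgn' (y : ℝ) : ℝ := if 0 ≤ y then 1 else -1

theorem sgn'_mul_abs (y : ℝ) : sgn' y * |y| = y := by
  unfold sgn'
  split_ifs with hy
  · rw [one_mul, abs_of_nonneg hy]
  · rw [abs_of_neg (not_le.1 hy), neg_one_mul, neg_neg]

theorem monotone_sgn'_mul_rpow_abs {ρ : ℝ} (hρ : 0 ≤ ρ) :
    Monotone fun y => sgn' y * |y| ^ ρ := by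
  intro a b hab
  dsimp only [sgn']
  rcases le_or_gt 0 a with ha | ha
  · rw [if_pos ha, if_pos (ha.trans hab), one_mul, one_mul, abs_of_nonneg ha,
      abs_of_nonneg (ha.trans hab)]
    exact Real.rpow_le_rpow ha hab hρ
  rw [if_neg ha.not_ge]
  rcases le_or_gt 0 b with hb | hb
  · rw [if_pos hb]
    have := Real.rpow_nonneg (abs_nonneg a) ρ
    have := Real.rpow_nonneg (abs_nonneg b) ρ
    linarith
  · rw [if_neg hb.not_ge, abs_of_neg ha, abs_of_neg hb, neg_one_mul, neg_one_mul, neg_le_neg_iff]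
    exact Real.rpow_le_rpow (by linarith) (by linarith) hρ

theorem Real.rpow_le_one_add {x γ : ℝ} (hx : 0 ≤ x) (hγ0 : 0 ≤ γ) (hγ1 : γ ≤ 1) :
    x ^ γ ≤ 1 + x := by
  rcases le_or_gt x 1 with hx1 | hx1
  · linarith [Real.rpow_le_one hx hx1 hγ0]
  · calc x ^ γ ≤ x ^ (1 : ℝ) := Real.rpow_le_rpow_of_exponent_le hx1.le hγ1
      _ = x := Real.rpow_one x
      _ ≤ 1 + x := by linarith

theorem metal_one_sided_lipschitz_general (A B C D ρ γ : ℝ)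
    (hB : 0 ≤ B) (hC : 0 ≤ C)
    (hρ0 : 0 < ρ) (hγ0 : 0 < γ) (hγ1 : γ ≤ 1)
    (f : ℝ → ℝ → ℝ → ℝ)
    (hf : ∀ t y z, f t y z =
      A - B * sgn' y * |y| - C * sgn' y * |y| ^ ρ * |z| ^ γ + D * y * |z| ^ γ)
    (t z y₁ y₂ : ℝ) :
    (y₁ - y₂) * (f t y₁ z - f t y₂ z) ≤ |D| * (1 + |z|) * (y₁ - y₂) ^ 2 := by
  set g : ℝ → ℝ := fun y => sgn' y * |y| ^ ρ
  have hg : 0 ≤ (g y₁ - g y₂) * (y₁ - y₂) :=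
    (monovary_id_iff.2 (monotone_sgn'_mul_rpow_abs hρ0.le)).sub_mul_sub_nonneg y₂ y₁
  have hz : 0 ≤ |z| ^ γ := by positivity
  calc (y₁ - y₂) * (f t y₁ z - f t y₂ z)
      = D * |z| ^ γ * (y₁ - y₂) ^ 2 - B * (y₁ - y₂) ^ 2
          - C * |z| ^ γ * ((g y₁ - g y₂) * (y₁ - y₂)) := by
        rw [hf, hf, mul_assoc B, mul_assoc B, sgn'_mul_abs, sgn'_mul_abs]
        ring
    _ ≤ D * |z| ^ γ * (y₁ - y₂) ^ 2 := by
        have := mul_nonneg hB (sq_nonneg (y₁ - y₂))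
        have := mul_nonneg (mul_nonneg hC hz) hg
        linarith
    _ ≤ |D| * (1 + |z|) * (y₁ - y₂) ^ 2 := by
        refine mul_le_mul_of_nonneg_right ?_ (sq_nonneg _)
        calc D * |z| ^ γ ≤ |D| * |z| ^ γ := mul_le_mul_of_nonneg_right (le_abs_self D) hz
          _ ≤ |D| * (1 + |z|) := by
            gcongr
            exact Real.rpow_le_one_add (abs_nonneg z) hγ0.le hγ1

theorem metal_one_sided_lipschitz (A B C D ρ γ : ℝ)
    (hA : 0 ≤ A) (hB : 0 ≤ B) (hC : 0 ≤ C)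
    (hρ0 : 0 < ρ) (hρ1 : ρ ≤ 1) (hγ0 : 0 < γ) (hγ1 : γ ≤ 1)
    (f : ℝ → ℝ → ℝ → ℝ)
    (hf : ∀ t y z, f t y z =
      A - B * sgn' y * |y| - C * sgn' y * |y| ^ ρ * |z| ^ γ + D * y * |z| ^ γ)
    (t z y₁ y₂ : ℝ) (ht : 0 ≤ t) :
    (y₁ - y₂) * (f t y₁ z - f t y₂ z) ≤ |D| * (1 + |z|) * (y₁ - y₂) ^ 2 :=
  metal_one_sided_lipschitz_general A B C D ρ γ hB hC hρ0 hγ0 hγ1 f hf t z y₁ y₂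
end

section
/- Let a < b, H ∈ ℝ, and let g : [a,b] × ℝ^d → ℝ^d satisfy ⟨y₁ - y₂, g(t,y₁) - g(t,y₂)⟩ ≤ H‖y₁ - y₂‖² for all t ∈ [a,b], y₁, y₂ ∈ ℝ^d. If z, u : [a,b] → ℝ^d are C¹ solutions of the ODE with initial values z(a) = ξ and u(a) = ζ, then for all t ∈ [a,b], ‖u(t) - z(t)‖ ≤ e^{max(H,0)·(b-a)}·‖ξ - ζ‖. -/
/-!
For the difference `v = u - z` of two solutions, one-sided Lipschitz continuity of the field gives
`(‖v‖²)' = 2⟪v, v'⟫ ≤ 2H‖v‖²`, so Grönwall's inequality yields `‖v t‖ ≤ e^{H(t-a)} ‖v a‖`, and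
`H(t - a) ≤ max(H, 0)(b - a)` on `[a, b]`.
-/

open Set
open scoped RealInnerProductSpace

variable {E : Type*} [NormedAddCommGroup E] [InnerProductSpace ℝ E]

theorem norm_le_exp_mul_of_inner_deriv_right_le {f f' : ℝ → E} {K a b : ℝ}
    (hf : ContinuousOn f (Icc a b)) (hf' : ∀ x ∈ Ico a b, HasDerivWithinAt f (f' x) (Ici x) x)
    (bound : ∀ x ∈ Ico a b, ⟪f x, f' x⟫ ≤ K * ‖f x‖ ^ 2) :
    ∀ x ∈ Icc a b, ‖f x‖ ≤ Real.exp (K * (x - a)) * ‖f a‖ := by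
  have h_sq : ∀ x ∈ Icc a b, ‖f x‖ ^ 2 ≤ ‖f a‖ ^ 2 * Real.exp (2 * K * (x - a)) := by
    intro x hx
    simpa only [gronwallBound_ε0] using
      le_gronwallBound_of_liminf_deriv_right_le (f := (‖f ·‖ ^ 2)) (ε := 0)
        (hf.norm.pow 2) (fun x hx _ hr => ((hf' x hx).norm_sq).liminf_right_slope_le hr) le_rfl
        (fun x hx => by linarith [bound x hx]) x hx
  intro x hx
  refine le_of_sq_le_sq ?_ (by positivity)
  calc ‖f x‖ ^ 2 ≤ ‖f a‖ ^ 2 * Real.exp (2 * K * (x - a)) := h_sq x hx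
    _ = (Real.exp (K * (x - a)) * ‖f a‖) ^ 2 := by
      rw [mul_pow, ← Real.exp_nat_mul]; ring_nf

theorem norm_sub_le_exp_mul_of_inner_sub_le {g : ℝ → E → E} {z u : ℝ → E} {H a b : ℝ}
    (hg : ∀ t ∈ Ico a b, ∀ y₁ y₂, ⟪y₁ - y₂, g t y₁ - g t y₂⟫ ≤ H * ‖y₁ - y₂‖ ^ 2)
    (hz : ContinuousOn z (Icc a b)) (hz' : ∀ t ∈ Ico a b, HasDerivWithinAt z (g t (z t)) (Ici t) t)
    (hu : ContinuousOn u (Icc a b)) (hu' : ∀ t ∈ Ico a b, HasDerivWithinAt u (g t (u t)) (Ici t) t) :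
    ∀ t ∈ Icc a b, ‖u t - z t‖ ≤ Real.exp (H * (t - a)) * ‖u a - z a‖ :=
  norm_le_exp_mul_of_inner_deriv_right_le (hu.sub hz) (fun t ht => (hu' t ht).sub (hz' t ht))
    (fun t ht => hg t ht (u t) (z t))

theorem ode_continuous_dependence_general (d : ℕ) (a b H : ℝ)
    (g : ℝ → EuclideanSpace ℝ (Fin d) → EuclideanSpace ℝ (Fin d))
    (hg : ∀ t ∈ Set.Icc a b, ∀ y₁ y₂,
      ⟪y₁ - y₂, g t y₁ - g t y₂⟫ ≤ H * ‖y₁ - y₂‖ ^ 2)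
    (ξ ζ : EuclideanSpace ℝ (Fin d))
    (z u : ℝ → EuclideanSpace ℝ (Fin d))
    (hz : ∀ t ∈ Set.Icc a b, HasDerivAt z (g t (z t)) t)
    (hu : ∀ t ∈ Set.Icc a b, HasDerivAt u (g t (u t)) t)
    (hza : z a = ξ) (hua : u a = ζ) :
    ∀ t ∈ Set.Icc a b,
      ‖u t - z t‖ ≤ Real.exp (max H 0 * (b - a)) * ‖ξ - ζ‖ := by
  intro t ht
  have h_gronwall := norm_sub_le_exp_mul_of_inner_sub_le
    (fun s hs => hg s (Ico_subset_Icc_self hs))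
    (fun s hs => (hz s hs).continuousAt.continuousWithinAt)
    (fun s hs => (hz s (Ico_subset_Icc_self hs)).hasDerivWithinAt)
    (fun s hs => (hu s hs).continuousAt.continuousWithinAt)
    (fun s hs => (hu s (Ico_subset_Icc_self hs)).hasDerivWithinAt) t ht
  have h_exp : Real.exp (H * (t - a)) ≤ Real.exp (max H 0 * (b - a)) :=
    Real.exp_le_exp.2 <| mul_le_mul (le_max_left H 0) (by linarith [ht.2]) (by linarith [ht.1])
      (le_max_right H 0)
  calc ‖u t - z t‖ ≤ Real.exp (H * (t - a)) * ‖ζ - ξ‖ := by rwa [hua, hza] at h_gronwall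
    _ ≤ Real.exp (max H 0 * (b - a)) * ‖ξ - ζ‖ := by
      rw [norm_sub_rev]; gcongr

theorem ode_continuous_dependence (d : ℕ) (a b H : ℝ) (hab : a < b)
    (g : ℝ → EuclideanSpace ℝ (Fin d) → EuclideanSpace ℝ (Fin d))
    (hg : ∀ t ∈ Set.Icc a b, ∀ y₁ y₂,
      ⟪y₁ - y₂, g t y₁ - g t y₂⟫ ≤ H * ‖y₁ - y₂‖ ^ 2)
    (ξ ζ : EuclideanSpace ℝ (Fin d))
    (z u : ℝ → EuclideanSpace ℝ (Fin d))
    (hz : ∀ t ∈ Set.Icc a b, HasDerivAt z (g t (z t)) t)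
    (hu : ∀ t ∈ Set.Icc a b, HasDerivAt u (g t (u t)) t)
    (hza : z a = ξ) (hua : u a = ζ) :
    ∀ t ∈ Set.Icc a b,
      ‖u t - z t‖ ≤ Real.exp (max H 0 * (b - a)) * ‖ξ - ζ‖ :=
  ode_continuous_dependence_general d a b H g hg ξ ζ z u hz hu hza hua
end
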